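/- arXiv:2405.05595 — 2 statements merged into one kernel-verified Lean document; each statement's English description precedes it below -/
import Mathlib

section
/- (Polygonal approximation of expectations on a two-sided constrained set.) Let P be a probability measure on C([0,1],ℝ), Φ a bounded continuous function on C([0,1],ℝ), and f⁻, f⁺ ∈ C([0,1],ℝ) with min_t (f⁺(t) − f⁻(t)) > 0. Define K = {w : f⁻(t) ≤ w(t) ≤ f⁺(t) for all t}. Assume P(∂K) = 0 where ∂K is the topological boundary of K in the sup metric. Then E^P[Φ · 1_K] = lim_{n→∞} E^P[(Φ ∘ π_n) · 1_{π_n^{-1}(K(π_n f⁻, π_n f⁺))}], where π_n is the polygonalization along the uniform partition and K(g⁻, g⁺) = {w : g⁻ ≤ w ≤ g⁺ pointwise}. -/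
open MeasureTheory Filter
open Topology

/-- Piecewise-linear interpolation (polygonalization) along the uniform partition `{k/n}`. -/
noncomputable def polygonal (x : ℝ → ℝ) (n : ℕ) (t : ℝ) : ℝ :=
  let k : ℕ := min n (Nat.floor (t * n) + 1)
  ((t - ((k - 1 : ℕ) : ℝ) / n) * x ((k : ℝ) / n)
    + ((k : ℝ) / n - t) * x (((k - 1 : ℕ) : ℝ) / n)) * n

/-- The set of continuous paths lying between the two continuous curves `g⁻` and `g⁺`. -/
def Kset (g h : C(Set.Icc (0 : ℝ) 1, ℝ)) : Set C(Set.Icc (0 : ℝ) 1, ℝ) :=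
  {w | ∀ t, g t ≤ w t ∧ w t ≤ h t}

lemma poly_repr (n : ℕ) (hn : 1 ≤ n) (t : ℝ) (ht0 : 0 ≤ t) (ht1 : t ≤ 1) :
    ∃ a b : ℝ, ∃ k : ℕ, 1 ≤ k ∧ k ≤ n ∧ 0 ≤ a ∧ 0 ≤ b ∧ a + b = 1 ∧
      |(k : ℝ)/n - t| ≤ 1/n ∧ |((k - 1 : ℕ) : ℝ)/n - t| ≤ 1/n ∧
      ∀ x : ℝ → ℝ, polygonal x n t = a * x ((k : ℝ)/n) + b * x (((k - 1 : ℕ) : ℝ)/n) := by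
  have hnpos : (0:ℝ) < n := by exact_mod_cast hn
  set k : ℕ := min n (Nat.floor (t * n) + 1) with hk
  have hk1 : 1 ≤ k := le_min hn (Nat.succ_le_succ (Nat.zero_le _))
  have hk2 : k ≤ n := min_le_left _ _
  have hcast : ((k - 1 : ℕ) : ℝ) = (k : ℝ) - 1 := by
    have := Nat.cast_sub (R := ℝ) hk1; simpa using this
  have hbounds : ((k:ℝ) - 1)/n ≤ t ∧ t ≤ (k:ℝ)/n := by
    by_cases h : Nat.floor (t * n) + 1 ≤ n
    · have hkeq : k = Nat.floor (t * n) + 1 := min_eq_right h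
      constructor
      · rw [div_le_iff₀ hnpos]
        have h1 : ((Nat.floor (t*n) : ℝ)) ≤ t * n := Nat.floor_le (by positivity)
        rw [hkeq]; push_cast; linarith
      · rw [le_div_iff₀ hnpos]
        have h1 : t * n < (Nat.floor (t*n) : ℝ) + 1 := Nat.lt_floor_add_one _
        rw [hkeq]; push_cast; linarith
    · have hn' : n ≤ Nat.floor (t * n) := by omega
      have h1 : (n : ℝ) ≤ t * n := le_trans (by exact_mod_cast hn') (Nat.floor_le (by positivity))
      have ht : t = 1 := le_antisymm ht1 (by nlinarith)
      have hkeq : k = n := min_eq_left (by omega)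
      rw [hkeq, ht]
      constructor
      · rw [div_le_iff₀ hnpos]; linarith
      · rw [le_div_iff₀ hnpos]; linarith
  refine ⟨(t - ((k-1:ℕ):ℝ)/n)*n, ((k:ℝ)/n - t)*n, k, hk1, hk2, ?_, ?_, ?_, ?_, ?_, ?_⟩
  · have : ((k-1:ℕ):ℝ)/n ≤ t := by rw [hcast]; exact hbounds.1
    nlinarith
  · nlinarith [hbounds.2]
  · rw [hcast]; field_simp; ring_nf
  · rw [abs_le]
    constructor
    · have := hbounds.2; have h2 : (0:ℝ) < 1/n := by positivity
      linarith
    · have := hbounds.1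
      have : (k:ℝ)/n - t ≤ (k:ℝ)/n - ((k:ℝ)-1)/n := by linarith
      have heq : (k:ℝ)/n - ((k:ℝ)-1)/n = 1/n := by field_simp; ring
      linarith
  · rw [hcast, abs_le]
    constructor
    · have heq : ((k:ℝ)-1)/n - (k:ℝ)/n = -(1/n) := by field_simp; ring
      have := hbounds.2; linarith
    · have := hbounds.1; have h2 : (0:ℝ) < 1/n := by positivity
      linarith
  · intro x
    show (let k' : ℕ := min n (Nat.floor (t * n) + 1);
      ((t - ((k' - 1 : ℕ) : ℝ) / n) * x ((k' : ℝ) / n)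
      + ((k' : ℝ) / n - t) * x (((k' - 1 : ℕ) : ℝ) / n)) * n) = _
    rw [← hk]
    ring

lemma poly_grid (n j : ℕ) (hn : 1 ≤ n) (hj : j ≤ n) (x : ℝ → ℝ) :
    polygonal x n ((j:ℝ)/n) = x ((j:ℝ)/n) := by
  have hnpos : (0:ℝ) < n := by exact_mod_cast hn
  have hmul : ((j:ℝ)/n) * n = (j:ℝ) := div_mul_cancel₀ _ (ne_of_gt hnpos)
  unfold polygonal
  simp only [hmul, Nat.floor_natCast]
  rcases lt_or_eq_of_le hj with h | h
  · have hmin : min n (j+1) = j + 1 := min_eq_right (by omega)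
    rw [hmin]
    simp only [Nat.add_sub_cancel]
    push_cast
    field_simp; ring
  · subst h
    have hmin : min j (j+1) = j := min_eq_left (by omega)
    rw [hmin]
    have hc : ((j - 1 : ℕ) : ℝ) = (j:ℝ) - 1 := by
      have := Nat.cast_sub (R := ℝ) hn; simpa using this
    rw [hc]
    field_simp; ring

lemma Kset_isClosed (g h : C(Set.Icc (0:ℝ) 1, ℝ)) :
    IsClosed (Kset g h) := by
  unfold Kset
  have : {w : C(Set.Icc (0:ℝ) 1, ℝ) | ∀ t, g t ≤ w t ∧ w t ≤ h t}
      = ⋂ t, ((fun w : C(Set.Icc (0:ℝ) 1, ℝ) => w t) ⁻¹' Set.Icc (g t) (h t)) := by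
    ext w; simp [Set.mem_iInter, Set.mem_Icc]
  rw [this]
  exact isClosed_iInter fun t => isClosed_Icc.preimage (continuous_eval_const t)

lemma gp_mem (n j : ℕ) (hn : 1 ≤ n) (hj : j ≤ n) : (j:ℝ)/n ∈ Set.Icc (0:ℝ) 1 := by
  have hnpos : (0:ℝ) < n := by exact_mod_cast hn
  constructor
  · positivity
  · rw [div_le_one hnpos]; exact_mod_cast hj

/-- Polygonal approximation of expectations on a two-sided constrained set:
`E^P[Φ·1_K] = lim_n E^P[(Φ∘π_n)·1_{π_n^{-1}(K(π_n f⁻, π_n f⁺))}]`, assuming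
`P(∂K) = 0`. -/
theorem polygonal_approximation_of_expectation
    [MeasurableSpace C(Set.Icc (0 : ℝ) 1, ℝ)] [BorelSpace C(Set.Icc (0 : ℝ) 1, ℝ)]
    (P : Measure C(Set.Icc (0 : ℝ) 1, ℝ)) [IsProbabilityMeasure P]
    (Φ : C(Set.Icc (0 : ℝ) 1, ℝ) → ℝ) (hΦc : Continuous Φ) (hΦb : ∃ M, ∀ w, |Φ w| ≤ M)
    (fm fp : C(Set.Icc (0 : ℝ) 1, ℝ)) (hgap : ∀ t, fm t < fp t)
    (π : ℕ → C(Set.Icc (0 : ℝ) 1, ℝ) → C(Set.Icc (0 : ℝ) 1, ℝ))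
    (hπ : ∀ n, 1 ≤ n → ∀ x t,
      (π n x) t = polygonal (fun s => x (Set.projIcc 0 1 zero_le_one s)) n t.1)
    (hbd : P (frontier (Kset fm fp)) = 0) :
    Tendsto
      (fun n => ∫ w,
        Set.indicator ((π n) ⁻¹' (Kset (π n fm) (π n fp))) (fun w => Φ (π n w)) w ∂P)
      atTop (nhds (∫ w in Kset fm fp, Φ w ∂P)) := by
  classical
  obtain ⟨M, hM⟩ := hΦb
  have hKmeas : MeasurableSet (Kset fm fp) := (Kset_isClosed fm fp).measurableSet
  -- convex-combination representation of the polygonal interpolation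
  have repr : ∀ n : ℕ, 1 ≤ n → ∀ t : Set.Icc (0:ℝ) 1, ∃ a b : ℝ,
      ∃ p q : Set.Icc (0:ℝ) 1, 0 ≤ a ∧ 0 ≤ b ∧ a + b = 1 ∧
      dist p t ≤ 1/(n:ℝ) ∧ dist q t ≤ 1/(n:ℝ) ∧
      ∀ x : C(Set.Icc (0:ℝ) 1, ℝ), (π n x) t = a * x p + b * x q := by
    intro n hn t
    obtain ⟨a, b, k, hk1, hk2, ha, hb, hab, hp, hq, hx⟩ := poly_repr n hn t.1 t.2.1 t.2.2
    refine ⟨a, b, ⟨(k:ℝ)/n, gp_mem n k hn hk2⟩,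
      ⟨((k-1:ℕ):ℝ)/n, gp_mem n (k-1) hn (by omega)⟩, ha, hb, hab, ?_, ?_, ?_⟩
    · rw [Subtype.dist_eq, Real.dist_eq]; exact hp
    · rw [Subtype.dist_eq, Real.dist_eq]; exact hq
    · intro x
      rw [hπ n hn x t, hx (fun s => x (Set.projIcc 0 1 zero_le_one s))]
      rw [Set.projIcc_of_mem zero_le_one (gp_mem n k hn hk2),
          Set.projIcc_of_mem zero_le_one (gp_mem n (k-1) hn (by omega))]
  -- the polygonal interpolation agrees with the function at grid points
  have grid : ∀ n, 1 ≤ n → ∀ j : ℕ, j ≤ n → ∀ x : C(Set.Icc (0:ℝ) 1, ℝ),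
      ∀ s : Set.Icc (0:ℝ) 1, (s:ℝ) = (j:ℝ)/n → (π n x) s = x s := by
    intro n hn j hj x s hs
    rw [hπ n hn x s, hs, poly_grid n j hn hj, ← hs,
      Set.projIcc_of_mem zero_le_one s.2]
  -- continuity of each π n
  have hπlip : ∀ n, 1 ≤ n → Continuous (π n) := by
    intro n hn
    refine (LipschitzWith.of_dist_le_mul (K := 1) ?_).continuous
    intro x y
    rw [NNReal.coe_one, one_mul, ContinuousMap.dist_le dist_nonneg]
    intro t
    obtain ⟨a, b, p, q, ha, hb, hab, _, _, hx⟩ := repr n hn t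
    rw [hx x, hx y, Real.dist_eq]
    have h1 : |x p - y p| ≤ dist x y := by
      rw [← Real.dist_eq]; exact ContinuousMap.dist_apply_le_dist p
    have h2 : |x q - y q| ≤ dist x y := by
      rw [← Real.dist_eq]; exact ContinuousMap.dist_apply_le_dist q
    have key : |a * x p + b * x q - (a * y p + b * y q)|
        ≤ a * |x p - y p| + b * |x q - y q| := by
      have e : a * x p + b * x q - (a * y p + b * y q)
          = a * (x p - y p) + b * (x q - y q) := by ring
      rw [e]
      calc |a * (x p - y p) + b * (x q - y q)|
          ≤ |a * (x p - y p)| + |b * (x q - y q)| := abs_add_le _ _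
        _ = a * |x p - y p| + b * |x q - y q| := by
            rw [abs_mul, abs_mul, abs_of_nonneg ha, abs_of_nonneg hb]
    have k1 : a * |x p - y p| ≤ a * dist x y := mul_le_mul_of_nonneg_left h1 ha
    have k2 : b * |x q - y q| ≤ b * dist x y := mul_le_mul_of_nonneg_left h2 hb
    have k3 : a * dist x y + b * dist x y = dist x y := by rw [← add_mul, hab, one_mul]
    linarith [key, k1, k2]
  -- uniform convergence of π n w → w
  have hconv : ∀ w : C(Set.Icc (0:ℝ) 1, ℝ), Tendsto (fun n => π n w) atTop (𝓝 w) := by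
    intro w
    rw [Metric.tendsto_atTop]
    intro ε hε
    have huc : UniformContinuous w := CompactSpace.uniformContinuous_of_continuous w.continuous
    obtain ⟨δ, hδ, H⟩ := Metric.uniformContinuous_iff.mp huc (ε/2) (by linarith)
    obtain ⟨N0, hN0⟩ := exists_nat_one_div_lt hδ
    refine ⟨N0 + 1, fun m hm => ?_⟩
    have hm1 : 1 ≤ m := le_trans (by omega) hm
    have hmpos : (0:ℝ) < m := by exact_mod_cast hm1
    have hdm : (1:ℝ)/m < δ := by
      have h1 : (1:ℝ)/m ≤ 1/(N0+1) := by
        apply one_div_le_one_div_of_le (by positivity)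
        exact_mod_cast hm
      calc (1:ℝ)/m ≤ 1/(N0+1) := h1
        _ < δ := hN0
    rw [ContinuousMap.dist_lt_iff hε]
    intro t
    obtain ⟨a, b, p, q, ha, hb, hab, hp, hq, hx⟩ := repr m hm1 t
    rw [hx w, Real.dist_eq]
    have h1 : |w p - w t| < ε/2 := by
      rw [← Real.dist_eq]; exact H (lt_of_le_of_lt hp hdm)
    have h2 : |w q - w t| < ε/2 := by
      rw [← Real.dist_eq]; exact H (lt_of_le_of_lt hq hdm)
    have e : a * w p + b * w q - w t = a * (w p - w t) + b * (w q - w t) := by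
      have : (a + b) * w t = 1 * w t := by rw [hab]
      nlinarith [this]
    rw [e]
    calc |a * (w p - w t) + b * (w q - w t)|
        ≤ |a * (w p - w t)| + |b * (w q - w t)| := abs_add_le _ _
      _ = a * |w p - w t| + b * |w q - w t| := by
          rw [abs_mul, abs_mul, abs_of_nonneg ha, abs_of_nonneg hb]
      _ < ε := by nlinarith [h1, h2]
  -- membership is preserved
  have hmem : ∀ w ∈ Kset fm fp, ∀ n, 1 ≤ n → π n w ∈ Kset (π n fm) (π n fp) := by
    intro w hw n hn t
    obtain ⟨a, b, p, q, ha, hb, hab, _, _, hx⟩ := repr n hn t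
    rw [hx fm, hx fp, hx w]
    constructor
    · exact add_le_add (mul_le_mul_of_nonneg_left (hw p).1 ha)
        (mul_le_mul_of_nonneg_left (hw q).1 hb)
    · exact add_le_add (mul_le_mul_of_nonneg_left (hw p).2 ha)
        (mul_le_mul_of_nonneg_left (hw q).2 hb)
  -- separation at grid points
  have hsep : ∀ u v : C(Set.Icc (0:ℝ) 1, ℝ), ∀ t0, u t0 < v t0 →
      ∀ᶠ n in atTop, ∃ s, (π n u) s < (π n v) s := by
    intro u v t0 hlt
    have hopen : IsOpen {s : Set.Icc (0:ℝ) 1 | u s < v s} :=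
      isOpen_lt u.continuous v.continuous
    obtain ⟨δ, hδ, hball⟩ := Metric.isOpen_iff.mp hopen t0 hlt
    obtain ⟨N0, hN0⟩ := exists_nat_one_div_lt hδ
    filter_upwards [eventually_ge_atTop (N0+1)] with n hn
    have hn1 : 1 ≤ n := le_trans (by omega) hn
    have hnpos : (0:ℝ) < n := by exact_mod_cast hn1
    have hjn : Nat.floor (t0.1 * n) ≤ n := by
      have h1 : t0.1 * n ≤ (n:ℝ) := by nlinarith [t0.2.2]
      calc Nat.floor (t0.1 * n) ≤ Nat.floor ((n:ℝ)) := Nat.floor_mono h1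
        _ = n := Nat.floor_natCast n
    set j : ℕ := Nat.floor (t0.1 * n) with hj
    have hmem' : (j:ℝ)/n ∈ Set.Icc (0:ℝ) 1 := gp_mem n j hn1 hjn
    set s : Set.Icc (0:ℝ) 1 := ⟨(j:ℝ)/n, hmem'⟩ with hs
    have hclose : dist s t0 < δ := by
      rw [Subtype.dist_eq, Real.dist_eq]
      have h1 : (j:ℝ) ≤ t0.1 * n := Nat.floor_le (mul_nonneg t0.2.1 hnpos.le)
      have h2 : t0.1 * n < (j:ℝ) + 1 := Nat.lt_floor_add_one _
      have hA : (j:ℝ)/n ≤ t0.1 := by rw [div_le_iff₀ hnpos]; linarith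
      have hB : t0.1 ≤ ((j:ℝ)+1)/n := by rw [le_div_iff₀ hnpos]; linarith
      have hC : ((j:ℝ)+1)/n = (j:ℝ)/n + 1/n := by ring
      have hpos : (0:ℝ) < 1/n := by positivity
      have habs : |(s:ℝ) - t0.1| ≤ 1/n := by
        show |(j:ℝ)/n - t0.1| ≤ 1/n
        rw [abs_le]
        constructor <;> linarith
      have hlt2 : (1:ℝ)/n < δ := by
        have : (1:ℝ)/n ≤ 1/(N0+1) := by
          apply one_div_le_one_div_of_le (by positivity)
          exact_mod_cast hn
        linarith
      exact lt_of_le_of_lt habs hlt2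
    have hlt2 : u s < v s := hball (Metric.mem_ball.mpr hclose)
    exact ⟨s, by rw [grid n hn1 j hjn u s rfl, grid n hn1 j hjn v s rfl]; exact hlt2⟩
  -- nonmembers eventually escape
  have hnmem : ∀ w, w ∉ Kset fm fp →
      ∀ᶠ n in atTop, π n w ∉ Kset (π n fm) (π n fp) := by
    intro w hw
    have hex : ∃ t0, ¬ (fm t0 ≤ w t0 ∧ w t0 ≤ fp t0) := by
      by_contra h
      push_neg at h
      exact hw fun t => h t
    obtain ⟨t0, ht0⟩ := hex
    rcases not_and_or.mp ht0 with h | h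
    · filter_upwards [hsep w fm t0 (lt_of_not_ge h)] with n hn
      obtain ⟨s, hs⟩ := hn
      intro hmem'
      exact absurd (hmem' s).1 (not_le.mpr hs)
    · filter_upwards [hsep fp w t0 (lt_of_not_ge h)] with n hn
      obtain ⟨s, hs⟩ := hn
      intro hmem'
      exact absurd (hmem' s).2 (not_le.mpr hs)
  -- assemble via dominated convergence
  rw [← integral_indicator hKmeas]
  have hM0 : 0 ≤ M := le_trans (abs_nonneg _) (hM fm)
  apply tendsto_integral_filter_of_dominated_convergence (fun _ => M)
  · filter_upwards [eventually_ge_atTop 1] with n hn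
    exact ((hΦc.comp (hπlip n hn)).aestronglyMeasurable).indicator
      (((Kset_isClosed (π n fm) (π n fp)).measurableSet).preimage (hπlip n hn).measurable)
  · filter_upwards with n
    filter_upwards with w
    rw [Real.norm_eq_abs]
    by_cases hwm : w ∈ (π n) ⁻¹' Kset (π n fm) (π n fp)
    · rw [Set.indicator_of_mem hwm]; exact hM _
    · rw [Set.indicator_of_notMem hwm]; simpa using hM0
  · exact integrable_const M
  · filter_upwards with w
    by_cases hw : w ∈ Kset fm fp
    · rw [Set.indicator_of_mem hw]
      have hev : ∀ᶠ n in atTop,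
          Set.indicator ((π n) ⁻¹' Kset (π n fm) (π n fp)) (fun w => Φ (π n w)) w
            = Φ (π n w) := by
        filter_upwards [eventually_ge_atTop 1] with n hn
        exact Set.indicator_of_mem (hmem w hw n hn) _
      have hev' : (fun n => Φ (π n w)) =ᶠ[atTop]
          fun n => Set.indicator ((π n) ⁻¹' Kset (π n fm) (π n fp)) (fun w => Φ (π n w)) w := by
        filter_upwards [hev] with n hn using hn.symm
      have hT : Tendsto (fun n => Φ (π n w)) atTop (𝓝 (Φ w)) :=
        (hΦc.continuousAt.tendsto).comp (hconv w)
      exact Tendsto.congr' hev' hT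
    · rw [Set.indicator_of_notMem hw]
      have hev : ∀ᶠ n in atTop,
          Set.indicator ((π n) ⁻¹' Kset (π n fm) (π n fp)) (fun w => Φ (π n w)) w
            = 0 := by
        filter_upwards [hnmem w hw] with n hn
        exact Set.indicator_of_notMem hn _
      have hev' : (fun _ : ℕ => (0:ℝ)) =ᶠ[atTop]
          fun n => Set.indicator ((π n) ⁻¹' Kset (π n fm) (π n fp)) (fun w => Φ (π n w)) w := by
        filter_upwards [hev] with n hn using hn.symm
      exact Tendsto.congr' hev' tendsto_const_nhds
end

section
/- (Gaussian integral normalization for the discrete bridge density.) For n ≥ 1 and a, b ∈ ℝ: ∫_{ℝ^{n−1}} exp(−(n/2) Σ_{j=1}^{n} (x_j − x_{j−1})²) dx_1⋯dx_{n−1} = (1/√n)(2π/n)^{(n−1)/2} exp(−n(a−b)²/(2n)) = Ξ_{n,a,b}^n, where x_0 = a and x_n = b. -/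
open MeasureTheory Real

noncomputable section

/-- chain energy with k interior points -/
def Echain : (k : ℕ) → ℝ → ℝ → (Fin k → ℝ) → ℝ
  | 0, u, v, _ => (v - u)^2
  | k+1, u, v, y => (y 0 - u)^2 + Echain k (y 0) v (Fin.tail y)

lemma Echain_cont (k : ℕ) (v : ℝ) :
    Continuous fun p : ℝ × (Fin k → ℝ) => Echain k p.1 v p.2 := by
  induction k with
  | zero => simp only [Echain]; exact (continuous_const.sub continuous_fst).pow 2
  | succ k ih =>
    have h0 : Continuous fun p : ℝ × (Fin (k+1) → ℝ) => p.2 0 :=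
      (continuous_apply (0 : Fin (k+1))).comp continuous_snd
    have htail : Continuous fun p : ℝ × (Fin (k+1) → ℝ) => Fin.tail p.2 :=
      continuous_pi fun i => (continuous_apply i.succ).comp continuous_snd
    show Continuous fun p : ℝ × (Fin (k+1) → ℝ) =>
      (p.2 0 - p.1)^2 + Echain k (p.2 0) v (Fin.tail p.2)
    exact ((h0.sub continuous_fst).pow 2).add (ih.comp (h0.prodMk htail))

lemma gauss2_key (α β u v : ℝ) (hα : 0 < α) (hβ : 0 < β) :
    ∀ x : ℝ, α*(x-u)^2 + β*(x-v)^2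
      = (α+β)*(x - (α*u+β*v)/(α+β))^2 + α*β/(α+β)*(u-v)^2 := by
  intro x
  have h : α + β ≠ 0 := by positivity
  field_simp
  ring

lemma gauss2_integrable (α β u v : ℝ) (hα : 0 < α) (hβ : 0 ≤ β) :
    Integrable (fun x : ℝ => Real.exp (-(α*(x-u)^2 + β*(x-v)^2))) := by
  have hg : Integrable (fun x : ℝ => Real.exp (-α * (x-u)^2)) :=
    (integrable_exp_neg_mul_sq hα).comp_sub_right u
  refine hg.mono' ?_ ?_
  · exact (Continuous.neg (by continuity)).rexp.aestronglyMeasurable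
  · filter_upwards with x
    rw [Real.norm_eq_abs, abs_of_pos (Real.exp_pos _)]
    apply Real.exp_le_exp.2
    nlinarith [sq_nonneg (x - v), sq_nonneg (x - u)]

lemma gauss2_integral (α β u v : ℝ) (hα : 0 < α) (hβ : 0 < β) :
    (∫ x : ℝ, Real.exp (-(α*(x-u)^2 + β*(x-v)^2)))
      = Real.sqrt (π/(α+β)) * Real.exp (-(α*β/(α+β)*(u-v)^2)) := by
  simp_rw [fun x => gauss2_key α β u v hα hβ x, neg_add, Real.exp_add]
  rw [integral_mul_const]
  congr 1
  rw [show (fun x : ℝ => Real.exp (-((α+β)*(x - (α*u+β*v)/(α+β))^2)))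
        = fun x : ℝ => Real.exp (-(α+β) * (x - (α*u+β*v)/(α+β))^2) by
      funext x; ring_nf]
  rw [integral_sub_right_eq_self (fun x : ℝ => Real.exp (-(α+β) * x^2)) ((α*u+β*v)/(α+β)),
    integral_gaussian]

lemma key (c : ℝ) (hc : 0 < c) : ∀ k : ℕ,
    (∀ u v : ℝ, Integrable (fun y : Fin k → ℝ => Real.exp (-(c/2) * Echain k u v y))) ∧
    (∀ u v : ℝ, (∫ y : Fin k → ℝ, Real.exp (-(c/2) * Echain k u v y))
      = Real.sqrt ((2*π/c)^k / (k+1)) * Real.exp (-(c * (v-u)^2 / (2*(k+1))))) := by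
  intro k
  induction k with
  | zero =>
    haveI : IsFiniteMeasure (volume : Measure (Fin 0 → ℝ)) := by
      constructor
      rw [volume_pi, Measure.pi_univ]; simp
    have hconst : ∀ u v : ℝ, (fun y : Fin 0 → ℝ => Real.exp (-(c/2) * Echain 0 u v y))
          = fun _ : Fin 0 → ℝ => Real.exp (-(c * (v-u)^2 / (2*((0:ℕ)+1)))) := by
      intro u v
      funext y; show Real.exp (-(c/2) * (v-u)^2) = _; norm_num; ring_nf
    constructor
    · intro u v; rw [hconst u v]; exact integrable_const _
    · intro u v
      rw [hconst u v, integral_const]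
      rw [show (volume : Measure (Fin 0 → ℝ)).real Set.univ = 1 by
        rw [measureReal_def, volume_pi, Measure.pi_univ]; simp]
      simp
  | succ k ih =>
    have hα : (0:ℝ) < c/2 := by positivity
    have hk1 : (0:ℝ) < (k:ℝ) + 1 := by positivity
    have hβ : (0:ℝ) < c/(2*((k:ℝ)+1)) := by positivity
    set α : ℝ := c/2 with hαdef
    set β : ℝ := c/(2*((k:ℝ)+1)) with hβdef
    set Ck : ℝ := (2*π/c)^k / ((k:ℝ)+1) with hCk
    have hCk0 : 0 ≤ Ck := by positivity
    set e := MeasurableEquiv.piFinSuccAbove (fun _ : Fin (k+1) => ℝ) 0 with he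
    have hmp : MeasurePreserving e := volume_preserving_piFinSuccAbove (fun _ : Fin (k+1) => ℝ) 0
    have he_app : ∀ y : Fin (k+1) → ℝ, e y = (y 0, fun j : Fin k => y j.succ) := by
      intro y
      simp only [he, MeasurableEquiv.piFinSuccAbove, Fin.insertNthEquiv,
        MeasurableEquiv.coe_mk, Equiv.coe_fn_symm_mk]
      rfl
    -- everything below is per (u, v)
    have main : ∀ u v : ℝ,
        Integrable (fun y : Fin (k+1) → ℝ => Real.exp (-(c/2) * Echain (k+1) u v y)) ∧
        (∫ y : Fin (k+1) → ℝ, Real.exp (-(c/2) * Echain (k+1) u v y))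
          = Real.sqrt Ck * (Real.sqrt (π/(α+β)) * Real.exp (-(α*β/(α+β)*(u-v)^2))) := by
      intro u v
      set F : ℝ × (Fin k → ℝ) → ℝ :=
        fun p => Real.exp (-(c/2) * ((p.1 - u)^2 + Echain k p.1 v p.2)) with hF
      have hsplit : ∀ (t : ℝ) (z : Fin k → ℝ),
          F (t, z) = Real.exp (-(c/2)*(t-u)^2) * Real.exp (-(c/2) * Echain k t v z) := by
        intro t z
        rw [hF, ← Real.exp_add]
        ring_nf
      have hcomp : ∀ y : Fin (k+1) → ℝ,
          Real.exp (-(c/2) * Echain (k+1) u v y) = F (e y) := by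
        intro y
        rw [he_app y, hF]
        rfl
      have hFcont : Continuous F :=
        Real.continuous_exp.comp (continuous_const.mul
          (((continuous_fst.sub continuous_const).pow 2).add (Echain_cont k v)))
      have hsec : ∀ t : ℝ, Integrable (fun z : Fin k → ℝ => F (t, z)) := by
        intro t
        simp_rw [hsplit]
        exact (ih.1 t v).const_mul _
      have hmarg : ∀ t : ℝ, (∫ z : Fin k → ℝ, F (t, z))
          = Ck.sqrt * Real.exp (-(α*(t-u)^2 + β*(t-v)^2)) := by
        intro t
        simp_rw [hsplit]
        rw [integral_const_mul, ih.2 t v]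
        rw [mul_left_comm, ← Real.exp_add]
        congr 2
        rw [hαdef, hβdef]
        have h2 : (2:ℝ)*((k:ℝ)+1) ≠ 0 := by positivity
        field_simp
        ring
      have hnorm : ∀ t : ℝ, (∫ z : Fin k → ℝ, ‖F (t, z)‖)
          = Ck.sqrt * Real.exp (-(α*(t-u)^2 + β*(t-v)^2)) := by
        intro t
        rw [show (fun z : Fin k → ℝ => ‖F (t, z)‖) = fun z => F (t, z) from
          funext fun z => by rw [Real.norm_eq_abs, abs_of_pos (Real.exp_pos _)]]
        exact hmarg t
      have hFint : Integrable F (volume.prod volume) := by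
        refine (integrable_prod_iff hFcont.aestronglyMeasurable).2 ⟨?_, ?_⟩
        · exact Filter.Eventually.of_forall hsec
        · rw [show (fun t : ℝ => ∫ z : Fin k → ℝ, ‖F (t, z)‖)
              = fun t => Ck.sqrt * Real.exp (-(α*(t-u)^2 + β*(t-v)^2)) from funext hnorm]
          exact (gauss2_integrable α β u v hα hβ.le).const_mul _
      have hFintv : Integrable F (volume : Measure (ℝ × (Fin k → ℝ))) := by
        rwa [Measure.volume_eq_prod]
      constructor
      · rw [show (fun y : Fin (k+1) → ℝ => Real.exp (-(c/2) * Echain (k+1) u v y))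
            = fun y => F (e y) from funext hcomp]
        exact (hmp.integrable_comp_emb e.measurableEmbedding).2 hFintv
      · calc (∫ y : Fin (k+1) → ℝ, Real.exp (-(c/2) * Echain (k+1) u v y))
            = ∫ y, F (e y) := by simp_rw [hcomp]
          _ = ∫ p, F p := hmp.integral_comp e.measurableEmbedding F
          _ = ∫ t : ℝ, ∫ z : Fin k → ℝ, F (t, z) := by
              rw [Measure.volume_eq_prod]
              exact integral_prod F hFint
          _ = ∫ t : ℝ, Ck.sqrt * Real.exp (-(α*(t-u)^2 + β*(t-v)^2)) := by
              simp_rw [hmarg]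
          _ = Ck.sqrt * ∫ t : ℝ, Real.exp (-(α*(t-u)^2 + β*(t-v)^2)) := integral_const_mul _ _
          _ = Ck.sqrt * (Real.sqrt (π/(α+β)) * Real.exp (-(α*β/(α+β)*(u-v)^2))) := by
              rw [gauss2_integral α β u v hα hβ]
    -- now massage constants
    refine ⟨fun u v => (main u v).1, fun u v => ?_⟩
    rw [(main u v).2]
    have hαβ : (0:ℝ) < α + β := by positivity
    have hk2 : (0:ℝ) < (k:ℝ) + 2 := by positivity
    rw [← mul_assoc, ← Real.sqrt_mul hCk0]
    have hrad : Ck * (π/(α+β)) = (2*π/c)^(k+1) / ((k:ℕ)+1+1 : ℝ) := by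
      rw [hCk, hαdef, hβdef]
      have h2 : (2:ℝ)*((k:ℝ)+1) ≠ 0 := by positivity
      have hc0 : c ≠ 0 := hc.ne'
      field_simp
      have hcc : c * c⁻¹ = 1 := mul_inv_cancel₀ hc0
      linear_combination (-(π * π ^ k * c⁻¹ ^ k * 2 ^ k * 2)) * hcc
    have hexp : α*β/(α+β)*(u-v)^2 = c * (v-u)^2 / (2*((k:ℕ)+1+1 : ℝ)) := by
      rw [hαdef, hβdef]
      have h2 : (2:ℝ)*((k:ℝ)+1) ≠ 0 := by positivity
      field_simp
      ring
    rw [hrad, hexp]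
    push_cast
    ring_nf

lemma Echain_succ (k : ℕ) (u v : ℝ) (y : Fin (k+1) → ℝ) :
    Echain (k+1) u v y = (y 0 - u)^2 + Echain k (y 0) v (Fin.tail y) := rfl

lemma sum_eq (k : ℕ) : ∀ g : ℕ → ℝ,
    (∑ i ∈ Finset.range (k+1), (g (i+1) - g i)^2)
      = Echain k (g 0) (g (k+1)) (fun i => g (i+1)) := by
  induction k with
  | zero => intro g; simp [Echain]
  | succ k ih =>
    intro g
    have h2 := ih (fun j => g (j+1))
    rw [Finset.sum_range_succ', h2, Echain_succ]
    have htail : Fin.tail (fun i : Fin (k+1) => g (↑i+1)) = fun i : Fin k => g (↑i+1+1) := by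
      funext i; simp [Fin.tail]
    simp only [htail, Fin.val_zero]
    ring

lemma sqrt_pow_div (x s : ℝ) (hx : 0 ≤ x) (hs : 0 < s) (m : ℕ) :
    Real.sqrt (x^m / s) = (Real.sqrt s)⁻¹ * x ^ ((m:ℝ)/2) := by
  rw [Real.sqrt_div (by positivity) s, div_eq_mul_inv, mul_comm]
  congr 1
  rw [← Real.rpow_natCast x m, Real.sqrt_eq_rpow, ← Real.rpow_mul hx,
    mul_one_div]


/-- `Ξ_{n,a,b}^k := k^{−1/2} (2π/n)^{(k−1)/2} exp(−n(a−b)²/(2k))`. -/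
noncomputable def Xi (n k : ℕ) (a b : ℝ) : ℝ :=
  (Real.sqrt k)⁻¹ * (2 * Real.pi / n) ^ (((k : ℝ) - 1) / 2) *
    Real.exp (-(n : ℝ) * (a - b) ^ 2 / (2 * k))

/-- Extension of `y ∈ ℝ^{n−1}` to the grid `0,…,n` with pinned endpoints `x_0 = a, x_n = b`. -/
def extGrid (n : ℕ) (a b : ℝ) (y : Fin (n - 1) → ℝ) (j : ℕ) : ℝ :=
  if j = 0 then a else if j = n then b
  else if h : j - 1 < n - 1 then y ⟨j - 1, h⟩ else 0

/-- Gaussian normalization of the discrete bridge density: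
`∫_{ℝ^{n−1}} exp(−(n/2) Σ_{j=1}^n (x_j − x_{j−1})²) dx_1⋯dx_{n−1} = Ξ_{n,a,b}^n`
with `x_0 = a`, `x_n = b`. -/
theorem discrete_bridge_normalization (n : ℕ) (hn : 1 ≤ n) (a b : ℝ) :
    (∫ y : Fin (n - 1) → ℝ,
        Real.exp (-((n : ℝ) / 2) *
          ∑ j ∈ Finset.Icc 1 n, (extGrid n a b y j - extGrid n a b y (j - 1)) ^ 2))
      = Xi n n a b := by
  obtain ⟨m, rfl⟩ : ∃ m, n = m + 1 := ⟨n - 1, by omega⟩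
  have hsum : ∀ y : Fin (m + 1 - 1) → ℝ,
      (∑ j ∈ Finset.Icc 1 (m+1),
          (extGrid (m+1) a b y j - extGrid (m+1) a b y (j-1))^2)
        = Echain m a b y := by
    intro y
    set G : ℕ → ℝ := extGrid (m+1) a b y with hG
    have h0 : G 0 = a := by simp [hG, extGrid]
    have hnn : G (m+1) = b := by simp [hG, extGrid]
    have hy : (fun i : Fin m => G (↑i+1)) = y := by
      funext i
      have h1 : (↑i+1 : ℕ) ≠ 0 := Nat.succ_ne_zero _
      have h2 : (↑i+1 : ℕ) ≠ m+1 := by have := i.isLt; omega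
      have h3 : (↑i+1) - 1 < m+1-1 := by have := i.isLt; omega
      simp only [hG, extGrid, if_neg h1, if_neg h2, dif_pos h3]
      exact congrArg y (Fin.ext (by simp))
    rw [← Finset.Ico_add_one_right_eq_Icc, Finset.sum_Ico_eq_sum_range]
    have hre : ∑ i ∈ Finset.range (m+1+1-1), (G (1+i) - G (1+i-1))^2
        = ∑ i ∈ Finset.range (m+1), (G (i+1) - G i)^2 := by
      apply Finset.sum_congr rfl
      intro i _
      rw [show 1+i = i+1 from by omega, show i+1-1 = i from by omega]
    rw [hre, sum_eq m G]
    simp only [h0, hnn, hy]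
  simp only [hsum]
  show (∫ y : Fin m → ℝ, Real.exp (-((↑(m+1):ℝ)/2) * Echain m a b y)) = Xi (m+1) (m+1) a b
  have hkey := (key ((m+1:ℕ):ℝ) (by positivity) m).2 a b
  rw [hkey, sqrt_pow_div _ _ (by positivity) (by positivity) m]
  simp only [Xi]
  push_cast
  rw [show ((m:ℝ)+1-1)/2 = (m:ℝ)/2 by ring]
  congr 1
  rw [show -(((m:ℝ)+1) * (b-a)^2 / (2*((m:ℝ)+1))) = -((m:ℝ)+1)*(a-b)^2/(2*((m:ℝ)+1)) by ring]

end
end
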